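/- arXiv:1807.01047 — 2 statements merged into one kernel-verified Lean document; each statement's English description precedes it below -/
import Mathlib

section
/- Let {P_x^{(θ)} : x = 1,...,d, θ = 1,...,d+1} be a complete set of mutually unbiased measurements with efficiency parameter κ on a d-dimensional Hilbert space H (d ≥ 2). Then ∑_{θ=1}^{d+1} ∑_{x=1}^{d} P_x^{(θ)} ⊗ P_x^{(θ)} = f(κ)·I + g(κ)·F_swap, where f(κ) = 1 + (1−κ)/(d−1) and g(κ) = (κd−1)/(d−1). -/
open Matrix Kronecker BigOperators Complex
open scoped ComplexOrder

noncomputable section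

/-- The swap operator on `ℂ^d ⊗ ℂ^d`, as a matrix: `F(u ⊗ v) = v ⊗ u`. -/
def swapM (d : ℕ) : Matrix (Fin d × Fin d) (Fin d × Fin d) ℂ :=
  fun p q => if p.1 = q.2 ∧ p.2 = q.1 then 1 else 0

lemma swapM_apply (d : ℕ) (p q : Fin d × Fin d) :
    swapM d p q = if q = (p.2, p.1) then 1 else 0 := by
  have h : (p.1 = q.2 ∧ p.2 = q.1) ↔ q = (p.2, p.1) := by
    rw [Prod.ext_iff]
    constructor
    · rintro ⟨h1, h2⟩; exact ⟨h2.symm, h1.symm⟩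
    · rintro ⟨h1, h2⟩; exact ⟨h2.symm, h1.symm⟩
  show (if p.1 = q.2 ∧ p.2 = q.1 then (1 : ℂ) else 0) = _
  simp only [h]

lemma swapM_conjT (d : ℕ) : (swapM d)ᴴ = swapM d := by
  ext p q
  rw [conjTranspose_apply, swapM_apply, swapM_apply]
  have h : (p = (q.2, q.1)) ↔ q = (p.2, p.1) := by
    rw [Prod.ext_iff, Prod.ext_iff]
    constructor
    · rintro ⟨h1, h2⟩; exact ⟨h2.symm, h1.symm⟩
    · rintro ⟨h1, h2⟩; exact ⟨h2.symm, h1.symm⟩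
  simp only [h]
  split <;> simp

lemma swapM_mul_self (d : ℕ) : swapM d * swapM d = 1 := by
  ext p q
  rw [Matrix.mul_apply]
  simp only [swapM_apply]
  rw [Finset.sum_eq_single ((p.2, p.1) : Fin d × Fin d)]
  · simp only [if_pos rfl, one_mul, Matrix.one_apply]
    have : (q = ((p.2, p.1).2, (p.2, p.1).1)) ↔ p = q := by
      simp [Prod.ext_iff, eq_comm]
    simp only [this]
    simp
  · intro b _ hb; rw [if_neg (by simpa [eq_comm] using hb), zero_mul]
  · simp

lemma trace_swapM (d : ℕ) : (swapM d).trace = (d : ℂ) := by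
  simp only [Matrix.trace, Matrix.diag, swapM_apply]
  rw [Fintype.sum_prod_type]
  have : ∀ i j : Fin d, (((i, j) : Fin d × Fin d) = (j, i)) ↔ i = j := by
    intro i j
    constructor
    · intro h; exact (Prod.ext_iff.mp h).1
    · intro h; subst h; rfl
  simp only [this]
  simp [Finset.sum_ite_eq]

lemma kron_conjT {d : ℕ} (A B : Matrix (Fin d) (Fin d) ℂ) : (A ⊗ₖ B)ᴴ = Aᴴ ⊗ₖ Bᴴ := by
  ext p q
  simp [conjTranspose_apply, kroneckerMap_apply, mul_comm]

lemma trace_kron_mul_swapM {d : ℕ} (A B : Matrix (Fin d) (Fin d) ℂ) :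
    ((A ⊗ₖ B) * swapM d).trace = (A * B).trace := by
  have hswap : ∀ r p : Fin d × Fin d, swapM d r p = if r = (p.2, p.1) then 1 else 0 := by
    intro r p
    show (if r.1 = p.2 ∧ r.2 = p.1 then (1 : ℂ) else 0) = _
    have h : (r.1 = p.2 ∧ r.2 = p.1) ↔ r = (p.2, p.1) :=
      (Prod.ext_iff (x := r) (y := (p.2, p.1))).symm
    simp only [h]
  simp only [Matrix.trace, Matrix.diag, Matrix.mul_apply, hswap, mul_ite, mul_one, mul_zero,
    Finset.sum_ite_eq' Finset.univ, Finset.mem_univ, if_true, kroneckerMap_apply]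
  rw [Fintype.sum_prod_type]

lemma trace_conjT_mul_self_eq_zero {n : Type*} [Fintype n] [DecidableEq n]
    (A : Matrix n n ℂ) (h : (Aᴴ * A).trace = 0) : A = 0 := by
  have h2 : ∑ j, ∑ i, Complex.normSq (A i j) = 0 := by
    have h' : ((∑ j, ∑ i, Complex.normSq (A i j) : ℝ) : ℂ) = 0 := by
      rw [← h]
      simp only [Matrix.trace, Matrix.diag, Matrix.mul_apply, conjTranspose_apply]
      push_cast
      simp [Complex.normSq_eq_conj_mul_self]
    exact_mod_cast h'
  ext i j
  have h3 := (Finset.sum_eq_zero_iff_of_nonneg (fun j _ => Finset.sum_nonneg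
    (fun i _ => Complex.normSq_nonneg (A i j)))).mp h2 j (Finset.mem_univ j)
  have h4 := (Finset.sum_eq_zero_iff_of_nonneg (fun i _ => Complex.normSq_nonneg (A i j))).mp h3 i
    (Finset.mem_univ i)
  simpa using Complex.normSq_eq_zero.mp h4

theorem stmt3 (d : ℕ) (hd : 2 ≤ d) (κ : ℝ) (hκ1 : 1 / (d : ℝ) < κ) (hκ2 : κ ≤ 1)
    (P : Fin (d + 1) → Fin d → Matrix (Fin d) (Fin d) ℂ)
    (hPos : ∀ θ x, (P θ x).PosSemidef)
    (hPOVM : ∀ θ, ∑ x, P θ x = 1)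
    (hTr : ∀ θ x, (P θ x).trace = 1)
    (hUnbiased : ∀ θ θ', θ ≠ θ' → ∀ x y, (P θ x * P θ' y).trace = 1 / (d : ℂ))
    (hSame : ∀ θ x x', (P θ x * P θ x').trace =
      if x = x' then (κ : ℂ) else ((1 - κ) / ((d : ℝ) - 1) : ℝ)) :
    ∑ θ : Fin (d + 1), ∑ x : Fin d, (P θ x) ⊗ₖ (P θ x) =
      ((1 + (1 - κ) / ((d : ℝ) - 1) : ℝ) : ℂ) • (1 : Matrix (Fin d × Fin d) (Fin d × Fin d) ℂ)
        + (((κ * d - 1) / ((d : ℝ) - 1) : ℝ) : ℂ) • swapM d := by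
  have hd0 : (d : ℂ) ≠ 0 := by
    simp only [ne_eq, Nat.cast_eq_zero]; omega
  have hd1 : (d : ℂ) - 1 ≠ 0 := by
    intro h
    have : (d : ℂ) = ((1 : ℕ) : ℂ) := by push_cast; linear_combination h
    have : d = 1 := Nat.cast_injective this
    omega
  set c : ℂ := (((1 - κ) / ((d : ℝ) - 1) : ℝ) : ℂ) with hc
  set a : ℂ := ((1 + (1 - κ) / ((d : ℝ) - 1) : ℝ) : ℂ) with ha
  set b : ℂ := (((κ * d - 1) / ((d : ℝ) - 1) : ℝ) : ℂ) with hb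
  set G : Matrix (Fin d × Fin d) (Fin d × Fin d) ℂ :=
    ∑ θ : Fin (d + 1), ∑ x : Fin d, (P θ x) ⊗ₖ (P θ x) with hG
  set R : Matrix (Fin d × Fin d) (Fin d × Fin d) ℂ := a • 1 + b • swapM d with hR
  -- Hermiticity
  have hHermP : ∀ θ x, (P θ x)ᴴ = P θ x := fun θ x => (hPos θ x).1
  have hGH : Gᴴ = G := by
    rw [hG]
    rw [Matrix.conjTranspose_sum]
    refine Finset.sum_congr rfl fun θ _ => ?_
    rw [Matrix.conjTranspose_sum]
    refine Finset.sum_congr rfl fun x _ => ?_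
    rw [kron_conjT, hHermP]
  have hRH : Rᴴ = R := by
    rw [hR, Matrix.conjTranspose_add, Matrix.conjTranspose_smul, Matrix.conjTranspose_smul,
      Matrix.conjTranspose_one, swapM_conjT, ha, hb]
    simp [Complex.star_def, Complex.conj_ofReal]
  -- traces
  have hTrG : G.trace = ((d : ℂ) + 1) * d := by
    rw [hG]
    simp only [Matrix.trace_sum, Matrix.trace_kronecker, hTr, mul_one]
    simp only [Finset.sum_const, Finset.card_univ, Fintype.card_fin, nsmul_eq_mul, mul_one]
    push_cast; ring
  have hPP : ∀ θ x, (P θ x * P θ x).trace = (κ : ℂ) := fun θ x => by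
    simpa using hSame θ x x
  have hTrGF : (G * swapM d).trace = ((d : ℂ) + 1) * d * κ := by
    rw [hG]
    simp only [Finset.sum_mul, Matrix.trace_sum, trace_kron_mul_swapM, hPP]
    simp only [Finset.sum_const, Finset.card_univ, Fintype.card_fin, nsmul_eq_mul]
    push_cast; ring
  have hGG1 : (G * G).trace = ∑ θ, ∑ x, ∑ θ', ∑ x',
      ((P θ x * P θ' x').trace) * ((P θ x * P θ' x').trace) := by
    rw [hG]
    simp only [Finset.sum_mul, Finset.mul_sum, Matrix.trace_sum, ← Matrix.mul_kronecker_mul,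
      Matrix.trace_kronecker]
    refine Finset.sum_congr rfl fun θ _ => Finset.sum_congr rfl fun x _ =>
      Finset.sum_congr rfl fun θ' _ => Finset.sum_congr rfl fun x' _ => ?_
    rw [Matrix.trace_mul_comm]
  have hinner : ∀ θ x, (∑ θ', ∑ x',
      ((P θ x * P θ' x').trace) * ((P θ x * P θ' x').trace))
      = (κ : ℂ) ^ 2 + ((d : ℂ) - 1) * c ^ 2 + 1 := by
    intro θ x
    rw [← Finset.add_sum_erase _ _ (Finset.mem_univ θ)]
    have h1 : ∑ x', ((P θ x * P θ x').trace) * ((P θ x * P θ x').trace)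
        = (κ : ℂ) ^ 2 + ((d : ℂ) - 1) * c ^ 2 := by
      rw [← Finset.add_sum_erase _ _ (Finset.mem_univ x)]
      have hxx : (P θ x * P θ x).trace = (κ : ℂ) := hPP θ x
      have hoff : ∀ x' ∈ Finset.univ.erase x,
          ((P θ x * P θ x').trace) * ((P θ x * P θ x').trace) = c * c := by
        intro x' hx'
        have hne : x ≠ x' := (Finset.ne_of_mem_erase hx').symm
        rw [hSame θ x x', if_neg hne, hc]
      rw [hxx, Finset.sum_congr rfl hoff, Finset.sum_const,
        Finset.card_erase_of_mem (Finset.mem_univ x), Finset.card_univ, Fintype.card_fin,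
        nsmul_eq_mul]
      have hcast : ((d - 1 : ℕ) : ℂ) = (d : ℂ) - 1 := by
        push_cast [Nat.cast_sub (by omega : 1 ≤ d)]; ring
      rw [hcast]; ring
    have h2 : ∀ θ' ∈ Finset.univ.erase θ, (∑ x',
        ((P θ x * P θ' x').trace) * ((P θ x * P θ' x').trace)) = 1 / (d : ℂ) := by
      intro θ' hθ'
      have hne : θ ≠ θ' := (Finset.ne_of_mem_erase hθ').symm
      have : ∀ x', ((P θ x * P θ' x').trace) * ((P θ x * P θ' x').trace)
          = (1 / (d : ℂ)) * (1 / (d : ℂ)) := fun x' => by rw [hUnbiased θ θ' hne]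
      rw [Finset.sum_congr rfl fun x' _ => this x', Finset.sum_const, Finset.card_univ,
        Fintype.card_fin, nsmul_eq_mul]
      field_simp
    rw [h1, Finset.sum_congr rfl h2, Finset.sum_const,
      Finset.card_erase_of_mem (Finset.mem_univ θ), Finset.card_univ, Fintype.card_fin,
      nsmul_eq_mul]
    have : ((d + 1 - 1 : ℕ) : ℂ) * (1 / (d : ℂ)) = 1 := by
      simp only [Nat.add_sub_cancel]
      field_simp
    rw [this]
  have hTrGG : (G * G).trace
      = ((d : ℂ) + 1) * d * ((κ : ℂ) ^ 2 + ((d : ℂ) - 1) * c ^ 2 + 1) := by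
    rw [hGG1]
    simp only [hinner]
    simp only [Finset.sum_const, Finset.card_univ, Fintype.card_fin, nsmul_eq_mul]
    push_cast; ring
  have hTrGR : (G * R).trace = a * G.trace + b * (G * swapM d).trace := by
    rw [hR]
    rw [Matrix.mul_add, Matrix.trace_add, Matrix.mul_smul, Matrix.mul_smul, Matrix.mul_one,
      Matrix.trace_smul, Matrix.trace_smul, smul_eq_mul, smul_eq_mul]
  have hTrRG : (R * G).trace = (G * R).trace := Matrix.trace_mul_comm R G
  have hTrRR : (R * R).trace
      = a * a * ((d : ℂ) * d) + 2 * (a * b) * d + b * b * ((d : ℂ) * d) := by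
    rw [hR]
    simp only [Matrix.add_mul, Matrix.mul_add, Matrix.smul_mul, Matrix.mul_smul,
      Matrix.one_mul, Matrix.mul_one, swapM_mul_self, Matrix.trace_add, Matrix.trace_smul,
      smul_smul, smul_eq_mul, Matrix.trace_one, trace_swapM, Fintype.card_prod, Fintype.card_fin]
    push_cast; ring
  -- the key vanishing trace
  have hMM : ((G - R)ᴴ * (G - R)).trace = 0 := by
    have hH : (G - R)ᴴ = G - R := by rw [Matrix.conjTranspose_sub, hGH, hRH]
    rw [hH, Matrix.sub_mul, Matrix.mul_sub, Matrix.mul_sub, Matrix.trace_sub,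
      Matrix.trace_sub, Matrix.trace_sub]
    rw [hTrGG, hTrRG, hTrGR, hTrRR, hTrG, hTrGF]
    rw [ha, hb, hc]
    push_cast
    field_simp
    ring
  have hM0 : G - R = 0 := trace_conjT_mul_self_eq_zero _ hMM
  have := sub_eq_zero.mp hM0
  rw [this, hR]
end
end

section
/- Let {P_x^{(θ)}} be a complete set of MUMs on a d-dimensional space H_A with efficiency κ, and X̃ a positive semidefinite operator on H_A ⊗ H_B with Tr[X̃²] ≤ Tr_B[(Tr_A X̃)²] (e.g., arising from a state with nonnegative conditional collision entropy). If Tr_B[(Tr_A X̃)²] = 1, then ∑_{θ,x} Tr_B[(Tr_A[(P_x^{(θ)} ⊗ I)X̃])²] ≤ f(κ) + g(κ), i.e. the total collision quantity is at most f(κ) + g(κ) = 2. -/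
/-!
Identify `d × d` matrices with vectors of `EuclideanSpace ℂ (Fin d × Fin d)`, so that
`⟪A, B⟫ = Tr[A† B]`. The Gram matrix of a complete set of MUMs has the form
`⟪P θ x, P θ' y⟫ = c θ θ' + g δ_{θθ'} δ_{xy}`. Hence for a traceless `Z` the overlaps
`a θ x = Tr[P θ x Z]`, which sum to zero over each measurement, satisfy
`‖∑ a θ x P θ x‖² = g ∑ |a θ x|²`, and expanding `0 ≤ ‖g Z - ∑ a θ x P θ x‖²` gives
`∑ |a θ x|² ≤ g ‖Z‖²`. Splitting an arbitrary `Y` into its traceless part and `(Tr Y / d) 1` yields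
`∑ |Tr[P θ x Y]|² ≤ f |Tr Y|² + g ‖Y‖²`. Applied to the blocks `Y_{bb'} = ⟨b|X̃|b'⟩` and summed
over `b, b'`, this bounds the left-hand side by `f Tr_B[(Tr_A X̃)²] + g Tr[X̃²] ≤ f + g`.
-/

open Matrix Kronecker BigOperators Complex
open scoped ComplexOrder

noncomputable section

/-- Partial trace over the `A` factor. -/
def ptraceA (dA dB : ℕ) (X : Matrix (Fin dA × Fin dB) (Fin dA × Fin dB) ℂ) :
    Matrix (Fin dB) (Fin dB) ℂ :=
  fun b b' => ∑ a, X (a, b) (a, b')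

open scoped InnerProductSpace ComplexConjugate

section FrameBound

variable {𝕜 E : Type*} [RCLike 𝕜] [NormedAddCommGroup E] [InnerProductSpace 𝕜 E]

theorem sum_norm_inner_sq_le_of_norm_sum_smul_sq_le {ι : Type*} [Fintype ι] (v : ι → E) (z : E)
    {g : ℝ} (hg : 0 < g)
    (h : ‖∑ i, ⟪v i, z⟫_𝕜 • v i‖ ^ 2 ≤ g * ∑ i, ‖⟪v i, z⟫_𝕜‖ ^ 2) :
    ∑ i, ‖⟪v i, z⟫_𝕜‖ ^ 2 ≤ g * ‖z‖ ^ 2 := by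
  set u := ∑ i, ⟪v i, z⟫_𝕜 • v i
  set S := ∑ i, ‖⟪v i, z⟫_𝕜‖ ^ 2
  have hzu : RCLike.re ⟪z, u⟫_𝕜 = S := by
    simp only [u, S, inner_sum, inner_smul_right, map_sum]
    refine Finset.sum_congr rfl fun i _ => ?_
    rw [← inner_conj_symm, RCLike.conj_mul, RCLike.norm_conj, ← RCLike.ofReal_pow, RCLike.ofReal_re]
  have hexp := norm_sub_sq (𝕜 := 𝕜) ((g : 𝕜) • z) u
  rw [norm_smul, inner_smul_left, RCLike.conj_ofReal, RCLike.re_ofReal_mul, hzu,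
    RCLike.norm_ofReal, abs_of_pos hg] at hexp
  have hgS : g * S ≤ g * (g * ‖z‖ ^ 2) := by linarith [sq_nonneg ‖(g : 𝕜) • z - u‖]
  exact le_of_mul_le_mul_left hgS hg

variable {Θ X : Type*} [Fintype Θ] [Fintype X]

theorem sum_norm_add_sq_of_sum_eq_zero (a : X → 𝕜) (ha : ∑ x, a x = 0) (s : 𝕜) :
    ∑ x, ‖a x + s‖ ^ 2 = ∑ x, ‖a x‖ ^ 2 + Fintype.card X * ‖s‖ ^ 2 := by
  have hcross : ∑ x, RCLike.re ⟪a x, s⟫_𝕜 = 0 := by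
    rw [← map_sum, ← sum_inner, ha, inner_zero_left, map_zero]
  simp only [norm_add_sq (𝕜 := 𝕜), Finset.sum_add_distrib, ← Finset.mul_sum, hcross,
    Finset.sum_const, Finset.card_univ, nsmul_eq_mul]
  ring

variable [DecidableEq Θ] [DecidableEq X]

theorem norm_sum_sum_smul_sq_of_inner_eq (v : Θ → X → E) {c : Θ → Θ → 𝕜} {g : ℝ}
    (hv : ∀ θ θ' x y, ⟪v θ x, v θ' y⟫_𝕜 = c θ θ' + if θ = θ' ∧ x = y then (g : 𝕜) else 0)
    (a : Θ → X → 𝕜) (ha : ∀ θ, ∑ x, a θ x = 0) :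
    ‖∑ θ, ∑ x, a θ x • v θ x‖ ^ 2 = g * ∑ θ, ∑ x, ‖a θ x‖ ^ 2 := by
  have hrow : ∀ θ x, ∑ θ', ∑ y, conj (a θ' y) * ⟪v θ' y, v θ x⟫_𝕜 = conj (a θ x) * g := by
    intro θ x
    simp [hv, mul_add, Finset.sum_add_distrib, ← Finset.sum_mul, ← map_sum, ha, ite_and]
  have hinner : ⟪∑ θ, ∑ x, a θ x • v θ x, ∑ θ, ∑ x, a θ x • v θ x⟫_𝕜
      = g * ∑ θ, ∑ x, (‖a θ x‖ ^ 2 : 𝕜) := by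
    simp only [inner_sum, inner_smul_right, sum_inner, inner_smul_left, hrow, Finset.mul_sum]
    simp only [← mul_assoc, RCLike.mul_conj, mul_comm]
  rw [← RCLike.ofReal_re (K := 𝕜) (‖_‖ ^ 2), RCLike.ofReal_pow, ← inner_self_eq_norm_sq_to_K,
    hinner]
  simp

theorem sum_sum_norm_inner_sq_le_of_sum_inner_eq_zero (v : Θ → X → E) {c : Θ → Θ → 𝕜} {g : ℝ}
    (hg : 0 < g)
    (hv : ∀ θ θ' x y, ⟪v θ x, v θ' y⟫_𝕜 = c θ θ' + if θ = θ' ∧ x = y then (g : 𝕜) else 0)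
    (z : E) (hz : ∀ θ, ∑ x, ⟪v θ x, z⟫_𝕜 = 0) :
    ∑ θ, ∑ x, ‖⟪v θ x, z⟫_𝕜‖ ^ 2 ≤ g * ‖z‖ ^ 2 := by
  have h := norm_sum_sum_smul_sq_of_inner_eq v hv (fun θ x => ⟪v θ x, z⟫_𝕜) hz
  have := sum_norm_inner_sq_le_of_norm_sum_smul_sq_le (fun p : Θ × X => v p.1 p.2) z hg
    (by simpa only [Fintype.sum_prod_type] using h.le)
  simpa only [Fintype.sum_prod_type] using this

theorem sum_sum_norm_inner_sq_le [Nonempty Θ] [Nonempty X] (v : Θ → X → E) {c : Θ → Θ → 𝕜}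
    {g : ℝ} (hg : 0 < g)
    (hv : ∀ θ θ' x y, ⟪v θ x, v θ' y⟫_𝕜 = c θ θ' + if θ = θ' ∧ x = y then (g : 𝕜) else 0)
    (e : E) (he : ∀ θ, ∑ x, v θ x = e) (hve : ∀ θ x, ⟪v θ x, e⟫_𝕜 = 1) (z : E) :
    ∑ θ, ∑ x, ‖⟪v θ x, z⟫_𝕜‖ ^ 2 ≤
      (Fintype.card Θ - g) / Fintype.card X * ‖⟪e, z⟫_𝕜‖ ^ 2 + g * ‖z‖ ^ 2 := by
  set d : ℕ := Fintype.card X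
  have hd : (0 : ℝ) < d := Nat.cast_pos.2 Fintype.card_pos
  set t := ⟪e, z⟫_𝕜
  set s : 𝕜 := t / d
  set z₀ := z - s • e
  have hee : ⟪e, e⟫_𝕜 = d := by
    obtain ⟨θ⟩ := ‹Nonempty Θ›
    calc ⟪e, e⟫_𝕜 = ⟪∑ x, v θ x, e⟫_𝕜 := by rw [he]
      _ = d := by simp [sum_inner, hve, d]
  have hez₀ : ⟪e, z₀⟫_𝕜 = 0 := by
    have : (d : 𝕜) ≠ 0 := by exact_mod_cast hd.ne'
    simp only [z₀, s, inner_sub_right, inner_smul_right, hee]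
    field_simp
    ring
  have hsplit : ∀ θ x, ⟪v θ x, z⟫_𝕜 = ⟪v θ x, z₀⟫_𝕜 + s := by
    intro θ x
    simp [z₀, inner_sub_right, inner_smul_right, hve]
  have hcentred : ∀ θ, ∑ x, ⟪v θ x, z₀⟫_𝕜 = 0 := fun θ => by rw [← sum_inner, he, hez₀]
  have hnorm : ‖z‖ ^ 2 = ‖z₀‖ ^ 2 + d * ‖s‖ ^ 2 := by
    have horth : ⟪z₀, s • e⟫_𝕜 = 0 := by rw [inner_smul_right, ← inner_conj_symm, hez₀]; simp
    have hnorm_e : ‖e‖ ^ 2 = d := by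
      rw [← RCLike.ofReal_inj (K := 𝕜), RCLike.ofReal_pow, ← inner_self_eq_norm_sq_to_K, hee]; simp
    rw [show z = z₀ + s • e by simp [z₀], norm_add_sq (𝕜 := 𝕜), horth, map_zero, norm_smul,
      mul_pow, hnorm_e]
    ring
  have hlhs : ∑ θ, ∑ x, ‖⟪v θ x, z⟫_𝕜‖ ^ 2
      = ∑ θ, ∑ x, ‖⟪v θ x, z₀⟫_𝕜‖ ^ 2 + Fintype.card Θ * (d * ‖s‖ ^ 2) := by
    simp only [hsplit, sum_norm_add_sq_of_sum_eq_zero _ (hcentred _), Finset.sum_add_distrib,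
      Finset.sum_const, Finset.card_univ, nsmul_eq_mul, d]
  have hs : ‖s‖ = ‖t‖ / d := by simp [s, norm_div]
  have hbound := sum_sum_norm_inner_sq_le_of_sum_inner_eq_zero v hg hv z₀ hcentred
  have hdt : (d : ℝ) * (‖t‖ / d) ^ 2 = ‖t‖ ^ 2 / d := by field_simp
  rw [hlhs, hnorm, hs, hdt]
  linear_combination hbound

end FrameBound

section HilbertSchmidt

variable {𝕜 m n : Type*} [RCLike 𝕜] [Fintype m] [Fintype n]

theorem inner_toLp_vec (A B : Matrix m n 𝕜) :
    ⟪WithLp.toLp 2 A.vec, WithLp.toLp 2 B.vec⟫_𝕜 = (Aᴴ * B).trace := by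
  rw [EuclideanSpace.inner_toLp_toLp, dotProduct_comm, star_vec_dotProduct_vec]

theorem norm_toLp_vec_sq (A : Matrix m n 𝕜) :
    ‖WithLp.toLp 2 A.vec‖ ^ 2 = ∑ i, ∑ j, ‖A i j‖ ^ 2 := by
  rw [EuclideanSpace.norm_sq_eq, Fintype.sum_prod_type, Finset.sum_comm]
  rfl

theorem Matrix.IsHermitian.trace_mul_self {M : Matrix n n 𝕜} (hM : M.IsHermitian) :
    (M * M).trace = ((∑ i, ∑ j, ‖M i j‖ ^ 2 : ℝ) : 𝕜) := by
  calc (M * M).trace = (Mᴴ * M).trace := by rw [hM.eq]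
    _ = _ := by
      rw [← inner_toLp_vec, inner_self_eq_norm_sq_to_K, ← RCLike.ofReal_pow, norm_toLp_vec_sq]

end HilbertSchmidt

section PartialTrace

variable {R m n : Type*}

def blockA (X : Matrix (m × n) (m × n) R) (b b' : n) : Matrix m m R :=
  of fun i j => X (i, b) (j, b')

theorem conjTranspose_blockA [Star R] (X : Matrix (m × n) (m × n) R) (b b' : n) :
    (blockA X b b')ᴴ = blockA Xᴴ b' b := rfl

theorem sum_sum_norm_blockA_sq [Norm R] [Fintype m] [Fintype n] (X : Matrix (m × n) (m × n) R) :
    ∑ b, ∑ b', ∑ i, ∑ j, ‖blockA X b b' i j‖ ^ 2 = ∑ p, ∑ q, ‖X p q‖ ^ 2 := by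
  simp only [blockA, of_apply, Fintype.sum_prod_type]
  calc _ = ∑ b, ∑ i, ∑ b', ∑ j, ‖X (i, b) (j, b')‖ ^ 2 :=
        Finset.sum_congr rfl fun _ _ => Finset.sum_comm
    _ = ∑ i, ∑ b, ∑ b', ∑ j, ‖X (i, b) (j, b')‖ ^ 2 := Finset.sum_comm
    _ = _ := Finset.sum_congr rfl fun _ _ => Finset.sum_congr rfl fun _ _ => Finset.sum_comm

variable {dA dB : ℕ}

theorem ptraceA_apply (X : Matrix (Fin dA × Fin dB) (Fin dA × Fin dB) ℂ) (b b' : Fin dB) :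
    ptraceA dA dB X b b' = (blockA X b b').trace := rfl

theorem ptraceA_kronecker_one_mul_apply (P : Matrix (Fin dA) (Fin dA) ℂ)
    (X : Matrix (Fin dA × Fin dB) (Fin dA × Fin dB) ℂ) (b b' : Fin dB) :
    ptraceA dA dB ((P ⊗ₖ (1 : Matrix (Fin dB) (Fin dB) ℂ)) * X) b b' =
      (P * blockA X b b').trace := by
  simp [ptraceA, blockA, mul_apply, trace, Fintype.sum_prod_type, one_apply]

theorem isHermitian_ptraceA {X : Matrix (Fin dA × Fin dB) (Fin dA × Fin dB) ℂ}
    (hX : X.IsHermitian) : (ptraceA dA dB X).IsHermitian := by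
  ext b b'
  rw [conjTranspose_apply, ptraceA_apply, ptraceA_apply, ← trace_conjTranspose,
    conjTranspose_blockA, hX.eq]

theorem isHermitian_ptraceA_kronecker_one_mul {P : Matrix (Fin dA) (Fin dA) ℂ}
    {X : Matrix (Fin dA × Fin dB) (Fin dA × Fin dB) ℂ} (hP : P.IsHermitian) (hX : X.IsHermitian) :
    (ptraceA dA dB ((P ⊗ₖ (1 : Matrix (Fin dB) (Fin dB) ℂ)) * X)).IsHermitian := by
  ext b b'
  rw [conjTranspose_apply, ptraceA_kronecker_one_mul_apply, ptraceA_kronecker_one_mul_apply,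
    ← trace_conjTranspose, conjTranspose_mul, conjTranspose_blockA, hX.eq, hP.eq, trace_mul_comm]

end PartialTrace

theorem sum_sum_sum_sum_comm {α β γ δ M : Type*} [Fintype α] [Fintype β] [Fintype γ] [Fintype δ]
    [AddCommMonoid M] (f : α → β → γ → δ → M) :
    ∑ a, ∑ b, ∑ c, ∑ d, f a b c d = ∑ c, ∑ d, ∑ a, ∑ b, f a b c d := by
  calc _ = ∑ p : α × β, ∑ q : γ × δ, f p.1 p.2 q.1 q.2 := by simp only [Fintype.sum_prod_type]
    _ = _ := by rw [Finset.sum_comm]; simp only [Fintype.sum_prod_type]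

section MUM

def mumF (d : ℕ) (κ : ℝ) : ℝ := 1 + (1 - κ) / ((d : ℝ) - 1)

def mumG (d : ℕ) (κ : ℝ) : ℝ := (κ * d - 1) / ((d : ℝ) - 1)

variable {d : ℕ} {κ : ℝ}

theorem mumG_pos (hd : 2 ≤ d) (hκ : 1 / (d : ℝ) < κ) : 0 < mumG d κ := by
  have hd' : (2 : ℝ) ≤ d := by exact_mod_cast hd
  rw [div_lt_iff₀ (by positivity)] at hκ
  exact div_pos (by linarith) (by linarith)

theorem sum_norm_trace_mul_sq_le_of_mum (hd : 2 ≤ d) (hκ : 1 / (d : ℝ) < κ)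
    (P : Fin (d + 1) → Fin d → Matrix (Fin d) (Fin d) ℂ)
    (hHerm : ∀ θ x, (P θ x).IsHermitian)
    (hPOVM : ∀ θ, ∑ x, P θ x = 1)
    (hTr : ∀ θ x, (P θ x).trace = 1)
    (hUnbiased : ∀ θ θ', θ ≠ θ' → ∀ x y, (P θ x * P θ' y).trace = 1 / (d : ℂ))
    (hSame : ∀ θ x x', (P θ x * P θ x').trace =
      if x = x' then (κ : ℂ) else ((1 - κ) / ((d : ℝ) - 1) : ℝ))
    (Y : Matrix (Fin d) (Fin d) ℂ) :
    ∑ θ, ∑ x, ‖(P θ x * Y).trace‖ ^ 2 ≤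
      mumF d κ * ‖Y.trace‖ ^ 2 + mumG d κ * ∑ i, ∑ j, ‖Y i j‖ ^ 2 := by
  have hd1 : (d : ℝ) - 1 ≠ 0 := by
    have : (2 : ℝ) ≤ d := by exact_mod_cast hd
    linarith
  have : NeZero d := ⟨by omega⟩
  have hκ_split : κ = (1 - κ) / ((d : ℝ) - 1) + mumG d κ := by
    rw [mumG]
    field_simp
    ring
  have hv : ∀ θ θ' x y,
      ⟪WithLp.toLp 2 (P θ x).vec, WithLp.toLp 2 (P θ' y).vec⟫_ℂ =
        (if θ = θ' then (((1 - κ) / ((d : ℝ) - 1) : ℝ) : ℂ) else 1 / d) +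
          if θ = θ' ∧ x = y then (mumG d κ : ℂ) else 0 := by
    intro θ θ' x y
    rw [inner_toLp_vec, (hHerm θ x).eq]
    by_cases hθ : θ = θ'
    · subst hθ
      rw [hSame]
      by_cases hxy : x = y
      · simp only [hxy, if_true, and_self]
        rw [← Complex.ofReal_add, ← hκ_split]
      · simp [hxy]
    · simp [hθ, hUnbiased θ θ' hθ]
  have he : ∀ θ, ∑ x, WithLp.toLp 2 (P θ x).vec =
      WithLp.toLp 2 (1 : Matrix (Fin d) (Fin d) ℂ).vec :=
    fun θ => by rw [← WithLp.toLp_sum, ← vec_sum, hPOVM]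
  have hve : ∀ θ x,
      ⟪WithLp.toLp 2 (P θ x).vec, WithLp.toLp 2 (1 : Matrix (Fin d) (Fin d) ℂ).vec⟫_ℂ = 1 :=
    fun θ x => by rw [inner_toLp_vec, mul_one, trace_conjTranspose, hTr, star_one]
  have hF : mumF d κ = ((d + 1 : ℕ) - mumG d κ) / (d : ℕ) := by
    simp only [mumF, mumG]
    push_cast
    field_simp
    ring
  have h := sum_sum_norm_inner_sq_le _ (mumG_pos hd hκ) hv _ he hve (WithLp.toLp 2 Y.vec)
  simp only [inner_toLp_vec, (hHerm _ _).eq, conjTranspose_one, one_mul, norm_toLp_vec_sq,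
    Fintype.card_fin] at h
  rwa [hF]

end MUM

theorem stmt15_general (dA dB : ℕ) (hd : 2 ≤ dA) (κ : ℝ) (hκ1 : 1 / (dA : ℝ) < κ)
    (P : Fin (dA + 1) → Fin dA → Matrix (Fin dA) (Fin dA) ℂ)
    (hPos : ∀ θ x, (P θ x).PosSemidef)
    (hPOVM : ∀ θ, ∑ x, P θ x = 1)
    (hTr : ∀ θ x, (P θ x).trace = 1)
    (hUnbiased : ∀ θ θ', θ ≠ θ' → ∀ x y, (P θ x * P θ' y).trace = 1 / (dA : ℂ))
    (hSame : ∀ θ x x', (P θ x * P θ x').trace =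
      if x = x' then (κ : ℂ) else ((1 - κ) / ((dA : ℝ) - 1) : ℝ))
    (X : Matrix (Fin dA × Fin dB) (Fin dA × Fin dB) ℂ) (hXpos : X.PosSemidef)
    (hXnorm : (ptraceA dA dB X * ptraceA dA dB X).trace = 1)
    (hXcoll : (X * X).trace.re ≤ 1) :
    (∑ θ : Fin (dA + 1), ∑ x : Fin dA,
        (ptraceA dA dB (((P θ x) ⊗ₖ (1 : Matrix (Fin dB) (Fin dB) ℂ)) * X) *
          ptraceA dA dB (((P θ x) ⊗ₖ (1 : Matrix (Fin dB) (Fin dB) ℂ)) * X)).trace).re ≤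
      (1 + (1 - κ) / ((dA : ℝ) - 1)) + (κ * dA - 1) / ((dA : ℝ) - 1) := by
  have hX := hXpos.isHermitian
  have hP : ∀ θ x, (P θ x).IsHermitian := fun θ x => (hPos θ x).isHermitian
  have hnorm : ∑ b, ∑ b', ‖(blockA X b b').trace‖ ^ 2 = 1 := by
    rw [(isHermitian_ptraceA hX).trace_mul_self, RCLike.ofReal_eq_complex_ofReal] at hXnorm
    exact_mod_cast hXnorm
  have hcoll : ∑ b, ∑ b', ∑ i, ∑ j, ‖blockA X b b' i j‖ ^ 2 ≤ 1 := by
    rw [hX.trace_mul_self, RCLike.ofReal_eq_complex_ofReal, ofReal_re] at hXcoll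
    rwa [sum_sum_norm_blockA_sq]
  calc _ = ∑ b, ∑ b', ∑ θ, ∑ x, ‖(P θ x * blockA X b b').trace‖ ^ 2 := by
        simp only [(isHermitian_ptraceA_kronecker_one_mul (hP _ _) hX).trace_mul_self,
          ptraceA_kronecker_one_mul_apply, re_sum, RCLike.ofReal_eq_complex_ofReal, ofReal_re]
        exact sum_sum_sum_sum_comm _
    _ ≤ ∑ b, ∑ b', (mumF dA κ * ‖(blockA X b b').trace‖ ^ 2 +
          mumG dA κ * ∑ i, ∑ j, ‖blockA X b b' i j‖ ^ 2) :=
      Finset.sum_le_sum fun b _ => Finset.sum_le_sum fun b' _ =>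
        sum_norm_trace_mul_sq_le_of_mum hd hκ1 P hP hPOVM hTr hUnbiased hSame _
    _ = mumF dA κ + mumG dA κ * ∑ b, ∑ b', ∑ i, ∑ j, ‖blockA X b b' i j‖ ^ 2 := by
      simp only [Finset.sum_add_distrib, ← Finset.mul_sum, hnorm, mul_one]
    _ ≤ mumF dA κ + mumG dA κ :=
      add_le_add_right (mul_le_of_le_one_right (mumG_pos hd hκ1).le hcoll) _

theorem stmt15 (dA dB : ℕ) (hd : 2 ≤ dA) (κ : ℝ) (hκ1 : 1 / (dA : ℝ) < κ) (hκ2 : κ ≤ 1)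
    (P : Fin (dA + 1) → Fin dA → Matrix (Fin dA) (Fin dA) ℂ)
    (hPos : ∀ θ x, (P θ x).PosSemidef)
    (hPOVM : ∀ θ, ∑ x, P θ x = 1)
    (hTr : ∀ θ x, (P θ x).trace = 1)
    (hUnbiased : ∀ θ θ', θ ≠ θ' → ∀ x y, (P θ x * P θ' y).trace = 1 / (dA : ℂ))
    (hSame : ∀ θ x x', (P θ x * P θ x').trace =
      if x = x' then (κ : ℂ) else ((1 - κ) / ((dA : ℝ) - 1) : ℝ))
    (X : Matrix (Fin dA × Fin dB) (Fin dA × Fin dB) ℂ) (hXpos : X.PosSemidef)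
    (hXnorm : (ptraceA dA dB X * ptraceA dA dB X).trace = 1)
    (hXcoll : (X * X).trace.re ≤ 1) :
    (∑ θ : Fin (dA + 1), ∑ x : Fin dA,
        (ptraceA dA dB (((P θ x) ⊗ₖ (1 : Matrix (Fin dB) (Fin dB) ℂ)) * X) *
          ptraceA dA dB (((P θ x) ⊗ₖ (1 : Matrix (Fin dB) (Fin dB) ℂ)) * X)).trace).re ≤
      (1 + (1 - κ) / ((dA : ℝ) - 1)) + (κ * dA - 1) / ((dA : ℝ) - 1) :=
  stmt15_general dA dB hd κ hκ1 P hPos hPOVM hTr hUnbiased hSame X hXpos hXnorm hXcoll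
end
end
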